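/- Let n be a nonempty finite type, let A, B : Matrix n n ℂ be positive semidefinite matrices, let V : Matrix n n ℂ be arbitrary, and let p : ℝ with p > 1. Denote by M^r the r-th power of a positive semidefinite matrix M given by the continuous functional calculus with the function x ↦ x^r on [0,∞). Then Re Tr[(V * B^(p/2) − A^(p/2) * V)* * (V * B^(p/2) − A^(p/2) * V)] ≤ (p²/(4(p−1))) · Re Tr[(V * B − A * V)* * (V * B^(p−1) − A^(p−1) * V)]. -/

import Mathlib

open Matrix
open scoped ComplexOrder

/-- real power of a (positive semidefinite) matrix via the continuous functional
calculus with the function `x ↦ x ^ r` on `[0, ∞)` -/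
noncomputable def mrpow {n : Type*} [Fintype n] [DecidableEq n]
    (M : Matrix n n ℂ) (r : ℝ) : Matrix n n ℂ :=
  cfc (fun x : ℝ => x ^ r) M

/-!
Write `A = U diag(a) U*` and `B = W diag(b) W*`. In these eigenbases the map
`V ↦ V f(B) - f(A) V` is the Schur multiplier `X i j ↦ X i j * (f (b j) - f (a i))` on
`X = U* V W`, so both traces are sums `∑ |X i j|² (…)(…)` with nonnegative weights, and the
inequality reduces to the scalar one
`(s^(p/2) - t^(p/2))² ≤ p²/(4(p-1)) (s - t)(s^(p-1) - t^(p-1))` for `s, t ≥ 0`.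
That is Cauchy–Schwarz for `s^(p/2) - t^(p/2) = (p/2) ∫_t^s x^((p-2)/2) dx`.
-/

theorem MeasureTheory.sq_integral_le_measureReal_mul_integral_sq {α : Type*} [MeasurableSpace α]
    {μ : Measure α} [IsFiniteMeasure μ] {f : α → ℝ} (hf : Integrable f μ)
    (hf2 : Integrable (fun x => f x ^ 2) μ) :
    (∫ x, f x ∂μ) ^ 2 ≤ μ.real Set.univ * ∫ x, f x ^ 2 ∂μ := by
  have hquad : ∀ c : ℝ,
      0 ≤ μ.real Set.univ * (c * c) + (-2 * ∫ x, f x ∂μ) * c + ∫ x, f x ^ 2 ∂μ := by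
    intro c
    have hlin : Integrable (fun x => 2 * f x * c) μ := (hf.const_mul 2).mul_const c
    calc 0 ≤ ∫ x, (f x - c) ^ 2 ∂μ := integral_nonneg fun x => sq_nonneg _
      _ = ∫ x, (f x ^ 2 - 2 * f x * c + c ^ 2) ∂μ := by simp_rw [sub_sq]
      _ = _ := by
        rw [integral_add (f := fun x => f x ^ 2 - 2 * f x * c) (hf2.sub hlin)
            (integrable_const _), integral_sub hf2 hlin, integral_mul_const, integral_const_mul,
          integral_const, smul_eq_mul]
        ring
  have hdisc := discrim_le_zero hquad
  rw [discrim] at hdisc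
  linarith

open MeasureTheory in
theorem Real.sq_rpow_div_two_sub_le {p s t : ℝ} (hp : 1 < p) (hs : 0 ≤ s) (ht : 0 ≤ t) :
    (s ^ (p / 2) - t ^ (p / 2)) ^ 2 ≤
      p ^ 2 / (4 * (p - 1)) * ((s - t) * (s ^ (p - 1) - t ^ (p - 1))) := by
  wlog hts : t ≤ s generalizing s t
  · convert this ht hs (le_of_not_ge hts) using 1 <;> ring
  have hr : -1 < p - 2 := by linarith
  have hr_half : -1 < (p - 2) / 2 := by linarith
  have hI : ∫ x in t..s, x ^ ((p - 2) / 2) = (s ^ (p / 2) - t ^ (p / 2)) / (p / 2) := by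
    rw [integral_rpow (Or.inl hr_half)]; ring_nf
  have hJ : ∫ x in t..s, x ^ (p - 2) = (s ^ (p - 1) - t ^ (p - 1)) / (p - 1) := by
    rw [integral_rpow (Or.inl hr)]; ring_nf
  have hsq : Set.EqOn (fun x : ℝ => (x ^ ((p - 2) / 2)) ^ 2) (fun x => x ^ (p - 2))
      (Set.Ioc t s) := fun x hx => by
    dsimp only
    rw [← Real.rpow_natCast, ← Real.rpow_mul (ht.trans hx.1.le)]
    norm_num
  have hCS : (∫ x in t..s, x ^ ((p - 2) / 2)) ^ 2 ≤ (s - t) * ∫ x in t..s, x ^ (p - 2) := by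
    rw [intervalIntegral.integral_of_le hts, intervalIntegral.integral_of_le hts,
      ← setIntegral_congr_fun measurableSet_Ioc hsq, ← Real.volume_real_Ioc_of_le hts,
      ← measureReal_restrict_apply_univ]
    exact sq_integral_le_measureReal_mul_integral_sq
      (intervalIntegral.intervalIntegrable_rpow' hr_half).1
      ((intervalIntegral.intervalIntegrable_rpow' hr).1.congr_fun hsq.symm measurableSet_Ioc)
  rw [hI, hJ, div_pow, div_le_iff₀ (by positivity)] at hCS
  refine hCS.trans_eq ?_
  field_simp
  ring

namespace Matrix

theorem trace_conjTranspose_mul_eq_sum {m n R : Type*} [Fintype m] [Fintype n]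
    [NonUnitalNonAssocSemiring R] [Star R] (P Q : Matrix m n R) :
    trace (Pᴴ * Q) = ∑ i, ∑ j, star (P i j) * Q i j := by
  simp only [trace, diag_apply, mul_apply, conjTranspose_apply]
  exact Finset.sum_comm

theorem trace_conjTranspose_mul_unitary_conj {n R : Type*} [Fintype n] [DecidableEq n]
    [CommRing R] [StarRing R] {U W : Matrix n n R} (hU : U ∈ unitaryGroup n R)
    (hW : W ∈ unitaryGroup n R) (P Q : Matrix n n R) :
    trace ((star U * P * W)ᴴ * (star U * Q * W)) = trace (Pᴴ * Q) := by
  have hUU : U * star U = 1 := mem_unitaryGroup_iff.mp hU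
  have hWW : W * star W = 1 := mem_unitaryGroup_iff.mp hW
  rw [conjTranspose_mul, conjTranspose_mul, ← star_eq_conjTranspose (star U), star_star,
    ← star_eq_conjTranspose W]
  calc trace (star W * (Pᴴ * U) * (star U * Q * W))
      = trace (star W * (Pᴴ * (U * star U) * Q) * W) := by simp only [Matrix.mul_assoc]
    _ = trace (Pᴴ * Q) := by
        rw [hUU, Matrix.mul_one, trace_mul_comm, ← Matrix.mul_assoc, hWW, Matrix.one_mul]

variable {n 𝕜 : Type*} [RCLike 𝕜] [Fintype n] [DecidableEq n] {A B : Matrix n n 𝕜}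

namespace IsHermitian

theorem star_eigenvectorUnitary_mul_cfc (hA : A.IsHermitian) (f : ℝ → ℝ) :
    star (hA.eigenvectorUnitary : Matrix n n 𝕜) * cfc f A =
      diagonal (RCLike.ofReal ∘ f ∘ hA.eigenvalues) *
        star (hA.eigenvectorUnitary : Matrix n n 𝕜) := by
  rw [hA.cfc_eq, IsHermitian.cfc, Unitary.conjStarAlgAut_apply, ← Matrix.mul_assoc,
    ← Matrix.mul_assoc, Unitary.coe_star_mul_self, Matrix.one_mul]

theorem cfc_mul_eigenvectorUnitary (hA : A.IsHermitian) (f : ℝ → ℝ) :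
    cfc f A * (hA.eigenvectorUnitary : Matrix n n 𝕜) =
      (hA.eigenvectorUnitary : Matrix n n 𝕜) *
        diagonal (RCLike.ofReal ∘ f ∘ hA.eigenvalues) := by
  rw [hA.cfc_eq, IsHermitian.cfc, Unitary.conjStarAlgAut_apply, Matrix.mul_assoc,
    Unitary.coe_star_mul_self, Matrix.mul_one]

theorem star_eigenvectorUnitary_mul_cfc_commutator_mul_apply
    (hA : A.IsHermitian) (hB : B.IsHermitian) (V : Matrix n n 𝕜) (f : ℝ → ℝ) (i j : n) :
    (star (hA.eigenvectorUnitary : Matrix n n 𝕜) * (V * cfc f B - cfc f A * V) *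
        (hB.eigenvectorUnitary : Matrix n n 𝕜)) i j =
      (star (hA.eigenvectorUnitary : Matrix n n 𝕜) * V * hB.eigenvectorUnitary) i j *
        ((f (hB.eigenvalues j) - f (hA.eigenvalues i) : ℝ) : 𝕜) := by
  set U : Matrix n n 𝕜 := ↑hA.eigenvectorUnitary
  set W : Matrix n n 𝕜 := ↑hB.eigenvectorUnitary
  have hdiag : star U * (V * cfc f B - cfc f A * V) * W =
      star U * V * W * diagonal (RCLike.ofReal ∘ f ∘ hB.eigenvalues) -
        diagonal (RCLike.ofReal ∘ f ∘ hA.eigenvalues) * (star U * V * W) := calc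
    _ = star U * V * (cfc f B * W) - star U * cfc f A * V * W := by
      simp only [Matrix.mul_sub, Matrix.sub_mul, Matrix.mul_assoc]
    _ = _ := by
      rw [hB.cfc_mul_eigenvectorUnitary, hA.star_eigenvectorUnitary_mul_cfc]
      simp only [U, W, Matrix.mul_assoc]
  rw [hdiag, sub_apply, mul_diagonal, diagonal_mul]
  simp only [Function.comp_apply, RCLike.ofReal_sub]
  ring

theorem re_trace_conjTranspose_cfc_commutator_mul (hA : A.IsHermitian) (hB : B.IsHermitian)
    (V : Matrix n n 𝕜) (f g : ℝ → ℝ) :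
    RCLike.re (trace ((V * cfc f B - cfc f A * V)ᴴ * (V * cfc g B - cfc g A * V))) =
      ∑ i, ∑ j,
        ‖(star (hA.eigenvectorUnitary : Matrix n n 𝕜) * V * hB.eigenvectorUnitary) i j‖ ^ 2 *
          ((f (hB.eigenvalues j) - f (hA.eigenvalues i)) *
            (g (hB.eigenvalues j) - g (hA.eigenvalues i))) := by
  rw [← trace_conjTranspose_mul_unitary_conj hA.eigenvectorUnitary.2 hB.eigenvectorUnitary.2,
    trace_conjTranspose_mul_eq_sum, map_sum]
  refine Finset.sum_congr rfl fun i _ => ?_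
  rw [map_sum]
  refine Finset.sum_congr rfl fun j _ => ?_
  rw [star_eigenvectorUnitary_mul_cfc_commutator_mul_apply,
    star_eigenvectorUnitary_mul_cfc_commutator_mul_apply, star_mul',
    RCLike.star_def, RCLike.conj_ofReal, mul_mul_mul_comm, RCLike.conj_mul,
    ← RCLike.ofReal_mul]
  norm_cast

end IsHermitian

theorem PosSemidef.re_trace_conjTranspose_cfc_commutator_mul_le (hA : A.PosSemidef)
    (hB : B.PosSemidef) (V : Matrix n n 𝕜) {f₁ g₁ f₂ g₂ : ℝ → ℝ} {c : ℝ}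
    (h : ∀ s t, 0 ≤ s → 0 ≤ t →
      (f₁ s - f₁ t) * (g₁ s - g₁ t) ≤ c * ((f₂ s - f₂ t) * (g₂ s - g₂ t))) :
    RCLike.re (trace ((V * cfc f₁ B - cfc f₁ A * V)ᴴ * (V * cfc g₁ B - cfc g₁ A * V))) ≤
      c * RCLike.re
        (trace ((V * cfc f₂ B - cfc f₂ A * V)ᴴ * (V * cfc g₂ B - cfc g₂ A * V))) := by
  rw [hA.isHermitian.re_trace_conjTranspose_cfc_commutator_mul hB.isHermitian,
    hA.isHermitian.re_trace_conjTranspose_cfc_commutator_mul hB.isHermitian, Finset.mul_sum]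
  refine Finset.sum_le_sum fun i _ => ?_
  rw [Finset.mul_sum]
  refine Finset.sum_le_sum fun j _ => ?_
  rw [mul_left_comm c]
  exact mul_le_mul_of_nonneg_left (h _ _ (hB.eigenvalues_nonneg j) (hA.eigenvalues_nonneg i))
    (by positivity)

end Matrix

theorem trace_power_inequality_general
    {n : Type*} [Fintype n] [DecidableEq n]
    (A B : Matrix n n ℂ) (hA : A.PosSemidef) (hB : B.PosSemidef)
    (V : Matrix n n ℂ) (p : ℝ) (hp : 1 < p) :
    (Matrix.trace ((V * mrpow B (p / 2) - mrpow A (p / 2) * V)ᴴ *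
        (V * mrpow B (p / 2) - mrpow A (p / 2) * V))).re ≤
      (p ^ 2 / (4 * (p - 1))) *
        (Matrix.trace ((V * B - A * V)ᴴ *
          (V * mrpow B (p - 1) - mrpow A (p - 1) * V))).re := by
  have hid : V * B - A * V = V * cfc (fun x : ℝ => x) B - cfc (fun x : ℝ => x) A * V := by
    rw [cfc_id' ℝ A hA.isHermitian.isSelfAdjoint, cfc_id' ℝ B hB.isHermitian.isSelfAdjoint]
  rw [hid]
  exact hA.re_trace_conjTranspose_cfc_commutator_mul_le hB V fun s t hs ht => by
    simpa only [sq] using Real.sq_rpow_div_two_sub_le hp hs ht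

/-- **Core trace inequality of Theorem 3.3** (strong `L_p`-regularity):
`Tr[|V B^{p/2} − A^{p/2} V|²] ≤ (p²/(4(p−1))) Re Tr[(VB − AV)* (V B^{p−1} − A^{p−1} V)]`. -/
theorem trace_power_inequality
    {n : Type*} [Fintype n] [DecidableEq n] [Nonempty n]
    (A B : Matrix n n ℂ) (hA : A.PosSemidef) (hB : B.PosSemidef)
    (V : Matrix n n ℂ) (p : ℝ) (hp : 1 < p) :
    (Matrix.trace ((V * mrpow B (p / 2) - mrpow A (p / 2) * V)ᴴ *
        (V * mrpow B (p / 2) - mrpow A (p / 2) * V))).re ≤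
      (p ^ 2 / (4 * (p - 1))) *
        (Matrix.trace ((V * B - A * V)ᴴ *
          (V * mrpow B (p - 1) - mrpow A (p - 1) * V))).re :=
  trace_power_inequality_general A B hA hB V p hp
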